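/- arXiv:2105.02975 — 2 statements merged into one kernel-verified Lean document; each statement's English description precedes it below -/
import Mathlib

section
/- Let (U_n)_{n∈ℕ} be a sequence of open subsets of ℝ with [0,1] ⊆ ⋃_n U_n. Define δ : [0,1] → ℝ by δ(x) = (1/4)·Σ_{n∈ℕ} 2^{−n}·min(1, dist(x, ℝ∖U_n)). Then δ is continuous, δ(x) > 0 for all x ∈ [0,1], and for every p ∈ [0,1] and k ∈ ℕ: if δ(p) > 2^{−k}, then the open interval (p − δ(p), p + δ(p)) is contained in ⋃_{n≤k} U_n. -/
/-!
Write `f_n(x) = min(1, dist(x, ℝ∖U_n)) ∈ [0,1]`, so that `δ = (1/4)·Σ 2^{-n} f_n`. Continuity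
follows from uniform convergence, and positivity from `f_n(x) > 0` for an `n` with `x ∈ U_n`.
If `f_n(p) ≤ δ(p)` for every `n ≤ k`, then the first `k+1` terms of the series contribute at
most `2δ(p)` and the tail at most `2^{-k}`, so `4δ(p) ≤ 2δ(p) + 2^{-k} < 3δ(p)`, which is absurd.
Hence `δ(p) < f_n(p)` for some `n ≤ k`, and then the ball of radius `δ(p)` about `p` lies in `U_n`.
-/

/-- The gauge associated to a countable open cover `(U_n)` of `[0,1]`:
`δ(x) = (1/4)·Σ_n 2^{-n}·min(1, dist(x, ℝ∖U_n))`, where the distance to the empty set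
is `+∞` (so the corresponding term is `1`). -/
noncomputable def coverGauge (U : ℕ → Set ℝ) (x : ℝ) : ℝ :=
  (1 / 4) * ∑' n : ℕ, (1 / 2 : ℝ) ^ n * (min 1 (EMetric.infEdist x (U n)ᶜ)).toReal

open Metric Set Finset

noncomputable def truncInfDist {X : Type*} [PseudoEMetricSpace X] (x : X) (s : Set X) : ℝ :=
  (min 1 (infEDist x s)).toReal

section truncInfDist

variable {X : Type*}

lemma min_one_infEDist_ne_top [PseudoEMetricSpace X] (x : X) (s : Set X) :
    min 1 (infEDist x s) ≠ ⊤ :=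
  ne_top_of_le_ne_top ENNReal.one_ne_top (min_le_left _ _)

lemma truncInfDist_nonneg [PseudoEMetricSpace X] (x : X) (s : Set X) : 0 ≤ truncInfDist x s :=
  ENNReal.toReal_nonneg

lemma truncInfDist_le_one [PseudoEMetricSpace X] (x : X) (s : Set X) : truncInfDist x s ≤ 1 :=
  (ENNReal.toReal_mono ENNReal.one_ne_top (min_le_left _ _)).trans_eq ENNReal.toReal_one

lemma continuous_truncInfDist [PseudoEMetricSpace X] (s : Set X) :
    Continuous (truncInfDist · s) :=
  ENNReal.continuousOn_toReal.comp_continuous (continuous_const.min continuous_infEDist)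
    fun x => min_one_infEDist_ne_top x s

lemma truncInfDist_compl_pos [PseudoEMetricSpace X] {U : Set X} (hU : IsOpen U) {x : X}
    (hx : x ∈ U) : 0 < truncInfDist x Uᶜ := by
  have hpos : 0 < infEDist x Uᶜ := by
    rw [infEDist_pos_iff_notMem_closure, hU.isClosed_compl.closure_eq]
    exact not_not.mpr hx
  exact ENNReal.toReal_pos (lt_min one_pos hpos).ne' (min_one_infEDist_ne_top x _)

lemma ball_subset_of_lt_truncInfDist_compl [PseudoMetricSpace X] {U : Set X} {x : X} {r : ℝ}
    (hr : r < truncInfDist x Uᶜ) : ball x r ⊆ U := by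
  intro y hy
  by_contra hyU
  have hle : truncInfDist x Uᶜ ≤ dist x y := by
    rw [dist_edist]
    exact ENNReal.toReal_mono (edist_ne_top x y)
      ((min_le_right _ _).trans (infEDist_le_edist_of_mem hyU))
  linarith [mem_ball'.mp hy]

end truncInfDist

section HalfPowSeries

lemma summable_half_pow_mul {g : ℕ → ℝ} (h0 : ∀ n, 0 ≤ g n) (h1 : ∀ n, g n ≤ 1) :
    Summable fun n => (1 / 2 : ℝ) ^ n * g n :=
  summable_geometric_two.of_nonneg_of_le (fun n => mul_nonneg (by positivity) (h0 n))
    fun n => mul_le_of_le_one_right (by positivity) (h1 n)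

lemma tsum_half_pow_mul_le_two {g : ℕ → ℝ} (h0 : ∀ n, 0 ≤ g n) (h1 : ∀ n, g n ≤ 1) :
    ∑' n, (1 / 2 : ℝ) ^ n * g n ≤ 2 :=
  ((summable_half_pow_mul h0 h1).tsum_le_tsum
    (fun n => mul_le_of_le_one_right (by positivity) (h1 n)) summable_geometric_two).trans_eq
    tsum_geometric_two

lemma exists_le_lt_of_half_pow_lt_quarter_tsum {g : ℕ → ℝ} (h0 : ∀ n, 0 ≤ g n)
    (h1 : ∀ n, g n ≤ 1) {k : ℕ} (hk : (1 / 2 : ℝ) ^ k < (1 / 4) * ∑' n, (1 / 2 : ℝ) ^ n * g n) :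
    ∃ n ≤ k, (1 / 4) * ∑' n, (1 / 2 : ℝ) ^ n * g n < g n := by
  set d := (1 / 4) * ∑' n, (1 / 2 : ℝ) ^ n * g n with hd
  by_contra! hsmall
  have hk0 : (0 : ℝ) < (1 / 2) ^ k := by positivity
  have hhead : ∑ i ∈ range (k + 1), (1 / 2 : ℝ) ^ i * g i ≤ 2 * d :=
    calc ∑ i ∈ range (k + 1), (1 / 2 : ℝ) ^ i * g i
        ≤ ∑ i ∈ range (k + 1), (1 / 2 : ℝ) ^ i * d :=
          sum_le_sum fun i hi => mul_le_mul_of_nonneg_left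
            (hsmall i (Nat.lt_succ_iff.mp (mem_range.mp hi))) (by positivity)
      _ = (∑ i ∈ range (k + 1), (1 / 2 : ℝ) ^ i) * d := (sum_mul ..).symm
      _ ≤ 2 * d := mul_le_mul_of_nonneg_right (sum_geometric_two_le _) (by linarith)
  have htail : ∑' i, (1 / 2 : ℝ) ^ (i + (k + 1)) * g (i + (k + 1)) ≤ (1 / 2) ^ k :=
    calc ∑' i, (1 / 2 : ℝ) ^ (i + (k + 1)) * g (i + (k + 1))
        = ∑' i, (1 / 2 : ℝ) ^ (k + 1) * ((1 / 2) ^ i * g (i + (k + 1))) :=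
          tsum_congr fun i => by ring
      _ = (1 / 2) ^ (k + 1) * ∑' i, (1 / 2 : ℝ) ^ i * g (i + (k + 1)) := tsum_mul_left
      _ ≤ (1 / 2) ^ (k + 1) * 2 :=
          mul_le_mul_of_nonneg_left
            (tsum_half_pow_mul_le_two (fun i => h0 _) fun i => h1 _) (by positivity)
      _ = (1 / 2) ^ k := by rw [pow_succ]; ring
  have hsplit := (summable_half_pow_mul h0 h1).sum_add_tsum_nat_add (k + 1)
  linarith

lemma continuous_tsum_half_pow_mul {X : Type*} [TopologicalSpace X] {f : ℕ → X → ℝ}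
    (hf : ∀ n, Continuous (f n)) (hbound : ∀ n x, ‖f n x‖ ≤ 1) :
    Continuous fun x => ∑' n, (1 / 2 : ℝ) ^ n * f n x :=
  continuous_tsum (fun n => continuous_const.mul (hf n)) summable_geometric_two fun n x => by
    rw [norm_mul, Real.norm_of_nonneg (by positivity)]
    exact mul_le_of_le_one_right (by positivity) (hbound n x)

end HalfPowSeries

section coverGauge

variable (U : ℕ → Set ℝ)

lemma coverGauge_eq (x : ℝ) :
    coverGauge U x = (1 / 4) * ∑' n, (1 / 2 : ℝ) ^ n * truncInfDist x (U n)ᶜ :=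
  rfl

lemma continuous_coverGauge : Continuous (coverGauge U) :=
  continuous_const.mul <| continuous_tsum_half_pow_mul
    (fun n => continuous_truncInfDist (U n)ᶜ) fun _ x =>
      (Real.norm_of_nonneg (truncInfDist_nonneg x _)).trans_le (truncInfDist_le_one x _)

variable {U}

lemma coverGauge_pos {n : ℕ} (hU : IsOpen (U n)) {x : ℝ} (hx : x ∈ U n) : 0 < coverGauge U x := by
  have hsum := summable_half_pow_mul (fun m => truncInfDist_nonneg x (U m)ᶜ)
    fun m => truncInfDist_le_one x (U m)ᶜ
  rw [coverGauge_eq]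
  exact mul_pos (by norm_num) <| hsum.tsum_pos
    (fun m => mul_nonneg (by positivity) (truncInfDist_nonneg _ _)) n
    (mul_pos (by positivity) (truncInfDist_compl_pos hU hx))

lemma Ioo_subset_biUnion_of_half_pow_lt_coverGauge {p : ℝ} {k : ℕ}
    (hk : (1 / 2 : ℝ) ^ k < coverGauge U p) :
    Ioo (p - coverGauge U p) (p + coverGauge U p) ⊆ ⋃ n ≤ k, U n := by
  obtain ⟨n, hnk, hn⟩ := exists_le_lt_of_half_pow_lt_quarter_tsum
    (fun m => truncInfDist_nonneg p (U m)ᶜ) (fun m => truncInfDist_le_one p (U m)ᶜ) hk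
  rw [← Real.ball_eq_Ioo]
  exact (ball_subset_of_lt_truncInfDist_compl hn).trans (subset_biUnion_of_mem (u := U) hnk)

end coverGauge

/-- If `(U_n)` is a sequence of open subsets of `ℝ` covering `[0,1]`, then the gauge
`δ(x) = (1/4)·Σ_n 2^{-n}·min(1, dist(x, ℝ∖U_n))` is continuous and positive on `[0,1]`,
and for all `p ∈ [0,1]` and `k ∈ ℕ`, if `δ(p) > 2^{-k}` then
`(p - δ(p), p + δ(p)) ⊆ ⋃_{n ≤ k} U_n`. -/
theorem coverGauge_spec (U : ℕ → Set ℝ) (hU : ∀ n, IsOpen (U n))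
    (hcov : Set.Icc (0:ℝ) 1 ⊆ ⋃ n, U n) :
    ContinuousOn (coverGauge U) (Set.Icc (0:ℝ) 1) ∧
    (∀ x ∈ Set.Icc (0:ℝ) 1, 0 < coverGauge U x) ∧
    ∀ p ∈ Set.Icc (0:ℝ) 1, ∀ k : ℕ, (1 / 2 : ℝ) ^ k < coverGauge U p →
      Set.Ioo (p - coverGauge U p) (p + coverGauge U p) ⊆ ⋃ n ≤ k, U n := by
  refine ⟨(continuous_coverGauge U).continuousOn, fun x hx => ?_,
    fun p _ k hk => Ioo_subset_biUnion_of_half_pow_lt_coverGauge hk⟩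
  obtain ⟨n, hn⟩ := mem_iUnion.mp (hcov hx)
  exact coverGauge_pos (hU n) hn
end

section
/- Let X and Y be metric spaces, let (f_n) be a sequence of continuous functions from X to Y converging pointwise to a function f : X → Y, and let U ⊆ Y be open. Then f^{−1}(U) is an F_σ set, i.e., a countable union of closed subsets of X. -/
/-!
Let `d y = infEDist y Uᶜ`; it is continuous and, `U` being open, positive exactly on `U`.
Since `d (g n x) → d (f x)`, the value `d (f x)` is positive iff some threshold `1/m` is eventually
below `d (g n x)`, so `f⁻¹ U = ⋃ m N, ⋂ n ≥ N, {x | 1/m ≤ d (g n x)}`, a countable union of closed sets.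
-/

open Filter Topology ENNReal

theorem IsOpen.setOf_infEDist_compl_pos {Y : Type*} [PseudoEMetricSpace Y] {U : Set Y}
    (hU : IsOpen U) : {y | 0 < Metric.infEDist y Uᶜ} = U := by
  ext y
  simp [Metric.infEDist_pos_iff_notMem_closure, hU.isClosed_compl.closure_eq]

-- For `m = 0` the threshold is `⊤`, which is harmless: `⊤ ≤ h n x` still forces `0 < φ x`.
theorem setOf_pos_eq_iUnion_iInter_of_tendsto {X : Type*} {φ : X → ℝ≥0∞} {h : ℕ → X → ℝ≥0∞}
    (hlim : ∀ x, Tendsto (fun n => h n x) atTop (𝓝 (φ x))) :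
    {x | 0 < φ x} = ⋃ (m : ℕ) (N : ℕ), ⋂ n ≥ N, {x | (m : ℝ≥0∞)⁻¹ ≤ h n x} := by
  ext x
  simp only [Set.mem_ofPred_eq, Set.mem_iUnion, Set.mem_iInter]
  constructor
  · intro hx
    obtain ⟨m, hm⟩ := exists_inv_nat_lt hx.ne'
    obtain ⟨N, hN⟩ := ((hlim x).eventually (eventually_gt_nhds hm)).exists_forall_of_atTop
    exact ⟨m, N, fun n hn => (hN n hn).le⟩
  · rintro ⟨m, N, hN⟩
    calc 0 < (m : ℝ≥0∞)⁻¹ := ENNReal.inv_pos.2 (natCast_ne_top m)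
      _ ≤ φ x := ge_of_tendsto (hlim x) (eventually_atTop.2 ⟨N, hN⟩)

/-- If `f : X → Y` (between metric spaces) is Baire class 1, i.e. the pointwise limit of
a sequence of continuous functions, then the preimage of every open set `U ⊆ Y` under `f`
is an `F_σ` set: a countable union of closed subsets of `X`. -/
theorem baire_one_preimage_open_Fsigma {X Y : Type*} [MetricSpace X] [MetricSpace Y]
    (f : X → Y) (g : ℕ → X → Y) (hg : ∀ n, Continuous (g n))
    (hlim : ∀ x, Tendsto (fun n => g n x) atTop (𝓝 (f x)))
    (U : Set Y) (hU : IsOpen U) :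
    ∃ F : ℕ → Set X, (∀ n, IsClosed (F n)) ∧ f ⁻¹' U = ⋃ n, F n := by
  set d : Y → ℝ≥0∞ := fun y => Metric.infEDist y Uᶜ
  have hd : Continuous d := Metric.continuous_infEDist
  refine ⟨fun k => ⋂ n ≥ k.unpair.2, {x | (k.unpair.1 : ℝ≥0∞)⁻¹ ≤ d (g n x)}, fun k => ?_, ?_⟩
  · exact isClosed_biInter fun n _ => isClosed_le continuous_const (hd.comp (hg n))
  · calc f ⁻¹' U = {x | 0 < d (f x)} := by rw [← hU.setOf_infEDist_compl_pos]; rfl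
      _ = ⋃ (m : ℕ) (N : ℕ), ⋂ n ≥ N, {x | (m : ℝ≥0∞)⁻¹ ≤ d (g n x)} :=
        setOf_pos_eq_iUnion_iInter_of_tendsto fun x => (hd.tendsto _).comp (hlim x)
      _ = _ := (Set.iUnion_unpair _).symm
end
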